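/- arXiv:2103.03909 — 3 statements merged into one kernel-verified Lean document; each statement's English description precedes it below -/
import Mathlib

section
/- The system of linear equations (1 + J·K_x)·ψ(x) = J·Σ_{y∈Λ_N : y∼x} ψ(y) + (h_x + λ_N(x) + J·Σ_{y∉Λ_N, y∼x} φ̄_y), for x ∈ Λ_N, has a unique solution ψ_N : Λ_N → ℝ, and this solution is given by the absolutely convergent series ψ_N(x) = α(x) + Σ_{n≥1} Σ_{(y_1,…,y_n) ∈ Λ_N^n} ( Π_{i=0}^{n−1} [K⁻_{y_i}·J/(1 + K_{y_i}·J)]·q(y_i, y_{i+1}) )·α(y_n), where y_0 = x. -/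
open MeasureTheory Real Filter

/-- Points of `ℤ³`. -/
abbrev Z3 : Type := ℤ × ℤ × ℤ

/-- Nearest-neighbor relation `x ∼ y`, i.e. `|x − y| = 1`. -/
def adj (x y : Z3) : Prop :=
  |x.1 - y.1| + |x.2.1 - y.2.1| + |x.2.2 - y.2.2| = 1

instance : DecidableRel adj := fun x y => by unfold adj; infer_instance

/-- The six nearest neighbors of a site. -/
def nbrs (x : Z3) : Finset Z3 :=
  {(x.1 + 1, x.2), (x.1 - 1, x.2), (x.1, x.2.1 + 1, x.2.2), (x.1, x.2.1 - 1, x.2.2),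
    (x.1, x.2.1, x.2.2 + 1), (x.1, x.2.1, x.2.2 - 1)}

/-- `Λ_N = {x : −2N ≤ x₁ < 2N, −N ≤ x₂ < N, −N ≤ x₃ < N}`. -/
noncomputable def Lam (N : ℕ) : Finset Z3 :=
  Finset.Icc (-(2 * N : ℤ)) (2 * N - 1) ×ˢ
    (Finset.Icc (-(N : ℤ)) (N - 1) ×ˢ Finset.Icc (-(N : ℤ)) (N - 1))

/-- `Ω_N = Λ_N ∪ Ω_N^left ∪ Ω_N^right`. -/
def inOmega (N : ℕ) (y : Z3) : Prop :=
  y ∈ Lam N ∨ y.1 < -(2 * N : ℤ) ∨ (2 * N : ℤ) ≤ y.1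

noncomputable instance (N : ℕ) : DecidablePred (inOmega N) := fun y => by unfold inOmega; infer_instance

/-- `K_x = #{y ∈ Ω_N : y ∼ x}`. -/
noncomputable def Kx (N : ℕ) (x : Z3) : ℕ := ((nbrs x).filter (inOmega N)).card

/-- `K⁻_x = #{y ∈ Λ_N : y ∼ x}`. -/
noncomputable def Km (N : ℕ) (x : Z3) : ℕ := ((nbrs x).filter (· ∈ Lam N)).card

/-- `h_x = h·1_{x₁<0}`. -/
noncomputable def hfun (h : ℝ) (x : Z3) : ℝ := if x.1 < 0 then h else 0

/-- the boundary configuration `φ̄` (equal to `λ+h` on the left reservoir, `−λ` on the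
right reservoir, and irrelevant = 0 elsewhere outside `Λ_N`). -/
noncomputable def phibar (lam h : ℝ) (N : ℕ) (y : Z3) : ℝ :=
  if y.1 < -(2 * N : ℤ) then lam + h else if (2 * N : ℤ) ≤ y.1 then -lam else 0

/-- `λ_N(x) = −λ(2x₁+1)/(4N+1)`. -/
noncomputable def lamN (lam : ℝ) (N : ℕ) (x : Z3) : ℝ :=
  -lam * (2 * x.1 + 1) / (4 * N + 1)

/-- `J·Σ_{y∉Λ_N, y∼x} φ̄_y`. -/
noncomputable def bterm (J h lam : ℝ) (N : ℕ) (x : Z3) : ℝ :=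
  J * ∑ y ∈ (nbrs x).filter (· ∉ Lam N), phibar lam h N y

/-- `α(z) = (h_z + λ_N(z) + J·Σ_{y∉Λ_N, y∼z} φ̄_y)/(1 + K_z·J)`. -/
noncomputable def alph (J h lam : ℝ) (N : ℕ) (z : Z3) : ℝ :=
  (hfun h z + lamN lam N z + bterm J h lam N z) / (1 + (Kx N z : ℝ) * J)

/-- `q(x,y) = (1/K⁻_x)·1_{y∈Λ_N, y∼x}`. -/
noncomputable def qker (N : ℕ) (x y : Z3) : ℝ :=
  (1 / (Km N x : ℝ)) * (if y ∈ Lam N ∧ adj x y then 1 else 0)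

/-- Sites of `Λ_N`. -/
abbrev LamT (N : ℕ) : Type := {z : Z3 // z ∈ Lam N}

/-- one factor `[K⁻_{x}·J/(1 + K_{x}·J)]·q(x, y)` of the series. -/
noncomputable def wfac (J : ℝ) (N : ℕ) (x y : Z3) : ℝ :=
  ((Km N x : ℝ) * J / (1 + (Kx N x : ℝ) * J)) * qker N x y

/-- the term of order `n+1` of the series:
`Σ_{(y_1,…,y_{n+1}) ∈ Λ_N^{n+1}} ( Π_{i=0}^{n} [K⁻_{y_i}·J/(1 + K_{y_i}·J)]·q(y_i, y_{i+1}) )·α(y_{n+1})`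
with `y_0 = x`. -/
noncomputable def sTerm (J h lam : ℝ) (N : ℕ) (x : Z3) (n : ℕ) : ℝ :=
  ∑ y : Fin (n + 1) → LamT N,
    (∏ i : Fin (n + 1),
        wfac J N ((Fin.cons x fun j => (y j : Z3) : Fin (n + 2) → Z3) i.castSucc)
          ((Fin.cons x fun j => (y j : Z3) : Fin (n + 2) → Z3) i.succ)) *
      alph J h lam N (y (Fin.last n) : Z3)

/-- `ψ` solves the linear system
`(1 + J·K_x)·ψ(x) = J·Σ_{y∈Λ_N : y∼x} ψ(y) + (h_x + λ_N(x) + J·Σ_{y∉Λ_N, y∼x} φ̄_y)`. -/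
def IsSol (J h lam : ℝ) (N : ℕ) (ψ : LamT N → ℝ) : Prop :=
  ∀ x : LamT N,
    (1 + J * (Kx N x : ℝ)) * ψ x =
      J * ∑ y ∈ ((nbrs (x : Z3)).filter (· ∈ Lam N)).attach,
          ψ ⟨(y : Z3), (Finset.mem_filter.mp y.2).2⟩ +
        (hfun h x + lamN lam N x + bterm J h lam N x)

/-!
The system reads `ψ = W ψ + α`, where `W x y = J / (1 + K_x J)` for the neighbours `y ∈ Λ_N`
of `x` and `0` otherwise, so that `W x y = [K⁻_x J / (1 + K_x J)] q(x, y)`. The matrix `W` is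
nonnegative with row sums `K⁻_x J / (1 + K_x J) ≤ 6J / (1 + 6J) < 1`, hence a contraction for
the sup norm. So `ψ ↦ W ψ + α` has exactly one fixed point, the Neumann series `∑ₙ Wⁿ α`,
and the term of order `n + 1` of the series in the statement is the path expansion of
`(W ^ (n + 1) α)(x)`.
-/

namespace Matrix

variable {ι : Type*} [Fintype ι] {W : Matrix ι ι ℝ} {c : ℝ}

theorem norm_mulVec_le_of_row_sum_le (hW : ∀ i j, 0 ≤ W i j) (hc : 0 ≤ c)
    (hrow : ∀ i, ∑ j, W i j ≤ c) (v : ι → ℝ) : ‖W *ᵥ v‖ ≤ c * ‖v‖ := by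
  refine (pi_norm_le_iff_of_nonneg (by positivity)).2 fun i => ?_
  calc ‖(W *ᵥ v) i‖ = |∑ j, W i j * v j| := rfl
    _ ≤ ∑ j, W i j * ‖v‖ := by
        refine (Finset.abs_sum_le_sum_abs _ _).trans (Finset.sum_le_sum fun j _ => ?_)
        rw [abs_mul, abs_of_nonneg (hW i j)]
        exact mul_le_mul_of_nonneg_left (norm_le_pi_norm v j) (hW i j)
    _ ≤ c * ‖v‖ := by
        rw [← Finset.sum_mul]
        exact mul_le_mul_of_nonneg_right (hrow i) (norm_nonneg v)

variable [DecidableEq ι]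

theorem norm_pow_mulVec_le (hc : 0 ≤ c) (hW : ∀ v, ‖W *ᵥ v‖ ≤ c * ‖v‖) (v : ι → ℝ) (n : ℕ) :
    ‖W ^ n *ᵥ v‖ ≤ c ^ n * ‖v‖ := by
  induction n with
  | zero => simp
  | succ n ih =>
    calc ‖W ^ (n + 1) *ᵥ v‖ = ‖W *ᵥ (W ^ n *ᵥ v)‖ := by rw [pow_succ', mulVec_mulVec]
      _ ≤ c * (c ^ n * ‖v‖) := (hW _).trans (mul_le_mul_of_nonneg_left ih hc)
      _ = c ^ (n + 1) * ‖v‖ := by ring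

theorem summable_norm_pow_mulVec (hc : 0 ≤ c) (hc1 : c < 1)
    (hW : ∀ v, ‖W *ᵥ v‖ ≤ c * ‖v‖) (v : ι → ℝ) : Summable fun n => ‖W ^ n *ᵥ v‖ :=
  ((summable_geometric_of_lt_one hc hc1).mul_right ‖v‖).of_nonneg_of_le
    (fun _ => norm_nonneg _) (norm_pow_mulVec_le hc hW v)

theorem summable_abs_pow_mulVec_apply (hc : 0 ≤ c) (hc1 : c < 1)
    (hW : ∀ v, ‖W *ᵥ v‖ ≤ c * ‖v‖) (v : ι → ℝ) (i : ι) :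
    Summable fun n => |(W ^ n *ᵥ v) i| :=
  (summable_norm_pow_mulVec hc hc1 hW v).of_nonneg_of_le (fun _ => abs_nonneg _)
    fun n => norm_le_pi_norm (W ^ n *ᵥ v) i

theorem eq_mulVec_add_iff_eq_tsum (hc : 0 ≤ c) (hc1 : c < 1)
    (hW : ∀ v, ‖W *ᵥ v‖ ≤ c * ‖v‖) (u v : ι → ℝ) :
    u = W *ᵥ u + v ↔ u = ∑' n, W ^ n *ᵥ v := by
  have hsum : Summable fun n => W ^ n *ᵥ v := (summable_norm_pow_mulVec hc hc1 hW v).of_norm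
  have hfix : ∑' n, W ^ n *ᵥ v = W *ᵥ ∑' n, W ^ n *ᵥ v + v := by
    have hmap : W *ᵥ ∑' n, W ^ n *ᵥ v = ∑' n, W *ᵥ (W ^ n *ᵥ v) :=
      (mulVecLin W).toContinuousLinearMap.map_tsum hsum
    rw [hmap, hsum.tsum_eq_zero_add]
    simp [pow_succ', mulVec_mulVec, add_comm]
  have hunique : ∀ u₁ u₂ : ι → ℝ, u₁ = W *ᵥ u₁ + v → u₂ = W *ᵥ u₂ + v → u₁ = u₂ := by
    intro u₁ u₂ h₁ h₂
    have hdiff : u₁ - u₂ = W *ᵥ (u₁ - u₂) := by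
      rw [mulVec_sub]; nth_rewrite 1 [h₁, h₂]; abel
    have : ‖u₁ - u₂‖ ≤ c * ‖u₁ - u₂‖ := by simpa only [← hdiff] using hW (u₁ - u₂)
    exact sub_eq_zero.1 (norm_le_zero_iff.1 (by nlinarith [norm_nonneg (u₁ - u₂)]))
  exact ⟨fun hu => hunique _ _ hu hfix, fun hu => hu ▸ hfix⟩

theorem tsum_pow_mulVec_apply (hc : 0 ≤ c) (hc1 : c < 1)
    (hW : ∀ v, ‖W *ᵥ v‖ ≤ c * ‖v‖) (v : ι → ℝ) (i : ι) :
    (∑' n, W ^ n *ᵥ v) i = v i + ∑' n, (W ^ (n + 1) *ᵥ v) i := by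
  rw [tsum_apply (summable_norm_pow_mulVec hc hc1 hW v).of_norm,
    (summable_abs_pow_mulVec_apply hc hc1 hW v i).of_abs.tsum_eq_zero_add]
  simp

end Matrix

lemma adj_iff_mem_nbrs (x y : Z3) : adj x y ↔ y ∈ nbrs x := by
  simp only [adj, nbrs, Finset.mem_insert, Finset.mem_singleton, Prod.ext_iff,
    Int.abs_eq_natAbs]
  omega

lemma Kx_le_six (N : ℕ) (x : Z3) : Kx N x ≤ 6 :=
  (Finset.card_filter_le _ _).trans Finset.card_le_six

lemma Km_le_Kx (N : ℕ) (x : Z3) : Km N x ≤ Kx N x :=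
  Finset.card_le_card (Finset.monotone_filter_right _ fun _ _ => Or.inl)

section Lattice

open Matrix

variable {N : ℕ} {J : ℝ}

noncomputable def wfacMatrix (J : ℝ) (N : ℕ) : Matrix (LamT N) (LamT N) ℝ :=
  Matrix.of fun x y => wfac J N x y

noncomputable def alphVec (J h lam : ℝ) (N : ℕ) : LamT N → ℝ :=
  fun z => alph J h lam N z

lemma wfacMatrix_apply (x y : LamT N) :
    wfacMatrix J N x y = if (y : Z3) ∈ nbrs x then J / (1 + (Kx N x : ℝ) * J) else 0 := by
  simp only [wfacMatrix, Matrix.of_apply, wfac, qker, y.2, true_and, adj_iff_mem_nbrs]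
  split_ifs with hy
  · have hKm : (Km N x : ℝ) ≠ 0 :=
      Nat.cast_ne_zero.2 (Finset.card_ne_zero.2 ⟨y, Finset.mem_filter.2 ⟨hy, y.2⟩⟩)
    field_simp
  · simp

lemma mulVec_wfacMatrix_apply (f : LamT N → ℝ) (x : LamT N) :
    (wfacMatrix J N *ᵥ f) x = J / (1 + (Kx N x : ℝ) * J) *
      ∑ y ∈ ((nbrs (x : Z3)).filter (· ∈ Lam N)).attach,
        f ⟨(y : Z3), (Finset.mem_filter.mp y.2).2⟩ := by
  simp only [mulVec, dotProduct, wfacMatrix_apply, ite_mul, zero_mul, ← Finset.sum_filter,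
    Finset.mul_sum]
  refine Finset.sum_bij' (fun y hy => ⟨y, Finset.mem_filter.2 ⟨(Finset.mem_filter.1 hy).2, y.2⟩⟩)
    (fun y _ => ⟨y, (Finset.mem_filter.1 y.2).2⟩) ?_ ?_ ?_ ?_ ?_ <;> simp_all

lemma sum_wfacMatrix_row (x : LamT N) :
    ∑ y, wfacMatrix J N x y = J / (1 + (Kx N x : ℝ) * J) * Km N x := by
  simpa [mulVec, dotProduct, Km] using mulVec_wfacMatrix_apply (J := J) (fun _ => 1) x

lemma wfacMatrix_nonneg (hJ : 0 < J) (x y : LamT N) : 0 ≤ wfacMatrix J N x y := by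
  rw [wfacMatrix_apply]
  split_ifs <;> positivity

lemma sum_wfacMatrix_row_le (hJ : 0 < J) (x : LamT N) :
    ∑ y, wfacMatrix J N x y ≤ 6 * J / (1 + 6 * J) := by
  have hm : (Km N x : ℝ) ≤ Kx N x := by exact_mod_cast Km_le_Kx N x
  have h6 : (Kx N x : ℝ) ≤ 6 := by exact_mod_cast Kx_le_six N x
  rw [sum_wfacMatrix_row, div_mul_eq_mul_div, div_le_div_iff₀ (by positivity) (by positivity)]
  nlinarith [mul_le_mul_of_nonneg_left hm (by positivity : 0 ≤ J * J),
    mul_le_mul_of_nonneg_left (hm.trans h6) hJ.le]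

lemma isSol_iff_eq_mulVec_add (hJ : 0 < J) (h lam : ℝ) (ψ : LamT N → ℝ) :
    IsSol J h lam N ψ ↔ ψ = wfacMatrix J N *ᵥ ψ + alphVec J h lam N := by
  rw [funext_iff]
  refine forall_congr' fun x => ?_
  have hd : 1 + (Kx N x : ℝ) * J ≠ 0 := by positivity
  rw [Pi.add_apply, mulVec_wfacMatrix_apply, alphVec, alph, div_mul_eq_mul_div,
    ← add_div, eq_div_iff hd]
  constructor <;> intro hx <;> linear_combination hx

lemma sTerm_zero (h lam : ℝ) (x : Z3) :
    sTerm J h lam N x 0 = ∑ y : LamT N, wfac J N x y * alph J h lam N y := by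
  unfold sTerm
  rw [← (Equiv.funUnique (Fin 1) (LamT N)).symm.sum_comp]
  simp

lemma sTerm_succ (h lam : ℝ) (x : Z3) (n : ℕ) :
    sTerm J h lam N x (n + 1) = ∑ a : LamT N, wfac J N x a * sTerm J h lam N a n := by
  unfold sTerm
  rw [← (Fin.consEquiv (fun _ : Fin (n + 2) => LamT N)).sum_comp, Fintype.sum_prod_type]
  refine Finset.sum_congr rfl fun a _ => ?_
  rw [Finset.mul_sum]
  refine Finset.sum_congr rfl fun y _ => ?_
  have hcons : (fun j => ((Fin.consEquiv (fun _ : Fin (n + 2) => LamT N)) (a, y) j : Z3))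
      = Fin.cons (a : Z3) (fun j => (y j : Z3)) := by
    funext j
    refine Fin.cases ?_ (fun i => ?_) j <;> simp [Fin.consEquiv]
  rw [hcons, Fin.prod_univ_succ]
  simp only [Fin.consEquiv_apply, ← Fin.succ_castSucc, ← Fin.succ_last,
    Fin.castSucc_zero, Fin.cons_zero, Fin.cons_succ]
  ring

lemma sTerm_eq_pow_mulVec (h lam : ℝ) (x : LamT N) (n : ℕ) :
    sTerm J h lam N x n = (wfacMatrix J N ^ (n + 1) *ᵥ alphVec J h lam N) x := by
  induction n generalizing x with
  | zero => rw [sTerm_zero, pow_one]; rfl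
  | succ n ih => rw [sTerm_succ, pow_succ', ← mulVec_mulVec]; simp only [ih]; rfl

end Lattice

open Matrix in
theorem statement0_general (N : ℕ) (J h lam : ℝ)
    (hJ : 0 < J) :
    (∃! ψ : LamT N → ℝ, IsSol J h lam N ψ) ∧
      ∀ ψ : LamT N → ℝ, IsSol J h lam N ψ →
        ∀ x : LamT N,
          Summable (fun n : ℕ => |sTerm J h lam N (x : Z3) n|) ∧
            ψ x = alph J h lam N (x : Z3) + ∑' n : ℕ, sTerm J h lam N (x : Z3) n := by
  have hc : 0 ≤ 6 * J / (1 + 6 * J) := by positivity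
  have hc1 : 6 * J / (1 + 6 * J) < 1 := by rw [div_lt_one (by positivity)]; linarith
  have hW : ∀ v, ‖wfacMatrix J N *ᵥ v‖ ≤ 6 * J / (1 + 6 * J) * ‖v‖ :=
    norm_mulVec_le_of_row_sum_le (wfacMatrix_nonneg hJ) hc (sum_wfacMatrix_row_le hJ)
  have hsol : ∀ ψ, IsSol J h lam N ψ ↔ ψ = ∑' n, wfacMatrix J N ^ n *ᵥ alphVec J h lam N :=
    fun ψ => (isSol_iff_eq_mulVec_add hJ h lam ψ).trans (eq_mulVec_add_iff_eq_tsum hc hc1 hW ψ _)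
  refine ⟨⟨_, (hsol _).2 rfl, fun ψ hψ => (hsol ψ).1 hψ⟩, fun ψ hψ x => ⟨?_, ?_⟩⟩
  · simp only [sTerm_eq_pow_mulVec]
    exact (summable_nat_add_iff (f := fun n => |(wfacMatrix J N ^ n *ᵥ alphVec J h lam N) x|) 1).2
      (summable_abs_pow_mulVec_apply hc hc1 hW _ x)
  · rw [(hsol ψ).1 hψ, tsum_pow_mulVec_apply hc hc1 hW]
    simp only [sTerm_eq_pow_mulVec, alphVec]

theorem statement0 (N : ℕ) (hN : 1 ≤ N) (J β h lam : ℝ)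
    (hJ : 0 < J) (hβ : 0 < β) (hh : h < 0) (hlam : 0 < lam) :
    (∃! ψ : LamT N → ℝ, IsSol J h lam N ψ) ∧
      ∀ ψ : LamT N → ℝ, IsSol J h lam N ψ →
        ∀ x : LamT N,
          Summable (fun n : ℕ => |sTerm J h lam N (x : Z3) n|) ∧
            ψ x = alph J h lam N (x : Z3) + ∑' n : ℕ, sTerm J h lam N (x : Z3) n :=
  statement0_general N J h lam hJ
end

section
/- Fix α ∈ (0, 1/2) and ε > 0, and for each integer N ≥ 1 set M = ⌊N^α⌋, R_ε = M^{2+ε}, and Σ⁺_N = {y ∈ Z^3 : y_1 = N, |y_2| ≤ M, |y_3| ≤ M}. Then lim_{N→∞} sup_{x ∈ Z^3 : x_1 ≥ N + R_ε} P_x[ ∃ n ≥ 0 : z_n ∈ Σ⁺_N ] = 0; i.e., the probability that the simple random walk started at x ever visits Σ⁺_N tends to 0 uniformly over starting points x with x_1 ≥ N + R_ε. -/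
/-!
With `c = (N, 0, 0)` and `t x = |x - c|² + 1`, the function `t ^ (-1/4)` is superharmonic for the
simple random walk wherever `t ≥ 400`: a step changes `t` by `1 ± 2 bᵢ` with `b = x - c`, and the
bound `(1 + h) ^ (-1/4) ≤ 1 - h/4 + 3/16 h²` for `|h| ≤ 1/8` averages over the six neighbours to
exactly `t ^ (-1/4) (1 - 1/(16 t²))`. Hence `min 1 (A t ^ (-1/4))` with `A⁴ = 625 M²` is
nonnegative, superharmonic, and at least `1` on `Σ⁺_N`, so it dominates the probability of ever
hitting `Σ⁺_N`. At distance `R_ε ≥ M²` from `c` it is at most `5 √M / M = 5 / √M`.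
-/

open Real Filter

/-- `P_x[∃ k ≤ n : z_k ∈ S]`: the probability that the simple random walk `(z_k)` on `ℤ³`
(one-step transition probabilities `p(x,y) = (1/6)·1_{x∼y}`) started at `x` visits `S`
within the first `n` steps, defined by the Markov-property recursion. -/
noncomputable def hitBy (S : Finset Z3) : ℕ → Z3 → ℝ
  | 0, x => if x ∈ S then 1 else 0
  | n + 1, x => if x ∈ S then 1 else ∑ y ∈ nbrs x, (1 / 6 : ℝ) * hitBy S n y

/-- `P_x[∃ n ≥ 0 : z_n ∈ S]`: the probability that the simple random walk started at `x`
ever visits `S`; by monotone convergence it is the supremum over `n` of the probabilities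
of visiting `S` within `n` steps. -/
noncomputable def hitProb (S : Finset Z3) (x : Z3) : ℝ := ⨆ n : ℕ, hitBy S n x

/-- `Σ⁺_N = {y ∈ ℤ³ : y₁ = N, |y₂| ≤ M, |y₃| ≤ M}`. -/
noncomputable def SigPlus (N M : ℕ) : Finset Z3 :=
  {(N : ℤ)} ×ˢ (Finset.Icc (-(M : ℤ)) (M : ℤ) ×ˢ Finset.Icc (-(M : ℤ)) (M : ℤ))

lemma one_add_rpow_neg_quarter_le {h : ℝ} (hh : |h| ≤ 1 / 8) :
    (1 + h) ^ (-(1 / 4 : ℝ)) ≤ 1 - h / 4 + 3 / 16 * h ^ 2 := by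
  have hpow (k : ℕ) : -(1 / 8) ^ k ≤ h ^ k ∧ h ^ k ≤ (1 / 8) ^ k :=
    abs_le.mp (abs_pow h k ▸ pow_le_pow_left₀ (abs_nonneg h) hh k)
  have hl : -(1 / 8) ≤ h := (abs_le.mp hh).1
  have hpos : 0 < 1 + h := by linarith
  -- `(1 + h) * (1 - h / 4 + 3 / 16 * h ^ 2) ^ 4 = 1 + h ^ 2 * Q h`, with `Q` the polynomial below
  have hQ : 0 ≤ 1 / 8 + h / 2 - 69 / 256 * h ^ 2 + 61 / 256 * h ^ 3 - 159 / 2048 * h ^ 4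
      + 135 / 4096 * h ^ 5 - 351 / 65536 * h ^ 6 + 81 / 65536 * h ^ 7 := by
    linarith [hpow 2, hpow 3, hpow 4, hpow 5, hpow 6, hpow 7]
  have hfour : (1 + h)⁻¹ ≤ (1 - h / 4 + 3 / 16 * h ^ 2) ^ 4 := by
    rw [inv_le_iff_one_le_mul₀ hpos]
    nlinarith [mul_nonneg (sq_nonneg h) hQ]
  refine le_of_pow_le_pow_left₀ four_ne_zero (by nlinarith) ?_
  rwa [← Real.rpow_natCast, ← Real.rpow_mul hpos.le, show -(1 / 4 : ℝ) * (4 : ℕ) = -1 by norm_num,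
    Real.rpow_neg_one]

lemma add_rpow_neg_quarter_le {t a : ℝ} (ht : 0 < t) (ha : |a| ≤ t / 8) :
    (t + a) ^ (-(1 / 4 : ℝ)) ≤ t ^ (-(1 / 4 : ℝ)) * (1 - a / t / 4 + 3 / 16 * (a / t) ^ 2) := by
  have hh : |a / t| ≤ 1 / 8 := by
    rw [abs_div, abs_of_pos ht, div_le_iff₀ ht]; linarith
  have hsplit : t + a = t * (1 + a / t) := by field_simp
  rw [hsplit, Real.mul_rpow ht.le (by linarith [(abs_le.mp hh).1])]
  exact mul_le_mul_of_nonneg_left (one_add_rpow_neg_quarter_le hh) (by positivity)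

lemma add_rpow_neg_quarter_add_le {t b : ℝ} (ht : 400 ≤ t) (hb : b ^ 2 ≤ t - 1) :
    (t + (1 + 2 * b)) ^ (-(1 / 4 : ℝ)) + (t + (1 - 2 * b)) ^ (-(1 / 4 : ℝ)) ≤
      t ^ (-(1 / 4 : ℝ)) * (2 - 1 / (2 * t) + 3 / 8 * (1 + 4 * b ^ 2) / t ^ 2) := by
  have ht0 : 0 < t := by linarith
  have hplus : |1 + 2 * b| ≤ t / 8 := by
    rw [abs_le]; constructor <;> nlinarith [sq_nonneg (b + 1), sq_nonneg (t - 400)]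
  have hminus : |1 - 2 * b| ≤ t / 8 := by
    rw [abs_le]; constructor <;> nlinarith [sq_nonneg (b - 1), sq_nonneg (t - 400)]
  calc _ ≤ _ := add_le_add (add_rpow_neg_quarter_le ht0 hplus) (add_rpow_neg_quarter_le ht0 hminus)
    _ = _ := by ring

lemma sum_add_rpow_neg_quarter_le {t b₁ b₂ b₃ : ℝ} (ht : 400 ≤ t)
    (hb : b₁ ^ 2 + b₂ ^ 2 + b₃ ^ 2 = t - 1) :
    ((t + (1 + 2 * b₁)) ^ (-(1 / 4 : ℝ)) + (t + (1 - 2 * b₁)) ^ (-(1 / 4 : ℝ)))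
      + ((t + (1 + 2 * b₂)) ^ (-(1 / 4 : ℝ)) + (t + (1 - 2 * b₂)) ^ (-(1 / 4 : ℝ)))
      + ((t + (1 + 2 * b₃)) ^ (-(1 / 4 : ℝ)) + (t + (1 - 2 * b₃)) ^ (-(1 / 4 : ℝ)))
      ≤ 6 * t ^ (-(1 / 4 : ℝ)) := by
  have h₁ := add_rpow_neg_quarter_add_le ht (b := b₁) (by nlinarith)
  have h₂ := add_rpow_neg_quarter_add_le ht (b := b₂) (by nlinarith)
  have h₃ := add_rpow_neg_quarter_add_le ht (b := b₃) (by nlinarith)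
  have hb₃ : b₃ ^ 2 = t - 1 - b₁ ^ 2 - b₂ ^ 2 := by linarith
  have ht0 : t ≠ 0 := by positivity
  calc _ ≤ _ := add_le_add (add_le_add h₁ h₂) h₃
    _ = 6 * t ^ (-(1 / 4 : ℝ)) - t ^ (-(1 / 4 : ℝ)) * (3 / (8 * t ^ 2)) := by
        rw [hb₃]; field_simp; ring
    _ ≤ 6 * t ^ (-(1 / 4 : ℝ)) := sub_le_self _ (by positivity)

lemma rpow_neg_quarter_pow_four {t : ℝ} (ht : 0 ≤ t) : (t ^ (-(1 / 4 : ℝ))) ^ 4 = t⁻¹ := by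
  rw [← Real.rpow_natCast, ← Real.rpow_mul ht, show -(1 / 4 : ℝ) * (4 : ℕ) = -1 by norm_num,
    Real.rpow_neg_one]

lemma le_mul_rpow_neg_quarter_iff {A t δ : ℝ} (hA : 0 ≤ A) (ht : 0 < t) (hδ : 0 ≤ δ) :
    δ ≤ A * t ^ (-(1 / 4 : ℝ)) ↔ δ ^ 4 * t ≤ A ^ 4 := by
  rw [← pow_le_pow_iff_left₀ hδ (by positivity) four_ne_zero, mul_pow,
    rpow_neg_quarter_pow_four ht.le, ← div_eq_mul_inv, le_div_iff₀ ht]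

lemma mul_rpow_neg_quarter_le_iff {A t δ : ℝ} (hA : 0 ≤ A) (ht : 0 < t) (hδ : 0 ≤ δ) :
    A * t ^ (-(1 / 4 : ℝ)) ≤ δ ↔ A ^ 4 ≤ δ ^ 4 * t := by
  rw [← pow_le_pow_iff_left₀ (by positivity) hδ four_ne_zero, mul_pow,
    rpow_neg_quarter_pow_four ht.le, ← div_eq_mul_inv, div_le_iff₀ ht]

lemma sum_nbrs (g : Z3 → ℝ) (x : Z3) : ∑ y ∈ nbrs x, g y =
    g (x.1 + 1, x.2) + g (x.1 - 1, x.2) + g (x.1, x.2.1 + 1, x.2.2) + g (x.1, x.2.1 - 1, x.2.2)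
      + g (x.1, x.2.1, x.2.2 + 1) + g (x.1, x.2.1, x.2.2 - 1) := by
  obtain ⟨a, b, c⟩ := x
  rw [nbrs, Finset.sum_insert, Finset.sum_insert, Finset.sum_insert, Finset.sum_insert,
    Finset.sum_insert, Finset.sum_singleton]
  · ring
  all_goals simp only [Finset.mem_insert, Finset.mem_singleton, Prod.mk.injEq]; omega

lemma card_nbrs (x : Z3) : (nbrs x).card = 6 := by
  have h := sum_nbrs (fun _ => (1 : ℝ)) x
  norm_num at h
  exact_mod_cast h

noncomputable def sqDist (c x : Z3) : ℝ :=
  ((x.1 - c.1 : ℤ) : ℝ) ^ 2 + ((x.2.1 - c.2.1 : ℤ) : ℝ) ^ 2 + ((x.2.2 - c.2.2 : ℤ) : ℝ) ^ 2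

lemma sqDist_nonneg (c x : Z3) : 0 ≤ sqDist c x := by
  unfold sqDist; positivity

lemma sum_nbrs_sqDist_rpow_le (c x : Z3) (hx : 400 ≤ sqDist c x + 1) :
    ∑ y ∈ nbrs x, 1 / 6 * (sqDist c y + 1) ^ (-(1 / 4 : ℝ)) ≤
      (sqDist c x + 1) ^ (-(1 / 4 : ℝ)) := by
  have h := sum_add_rpow_neg_quarter_le hx (b₁ := ((x.1 - c.1 : ℤ) : ℝ))
    (b₂ := ((x.2.1 - c.2.1 : ℤ) : ℝ)) (b₃ := ((x.2.2 - c.2.2 : ℤ) : ℝ)) (by unfold sqDist; ring)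
  -- `sqDist c (x ± eᵢ) + 1 = (sqDist c x + 1) + (1 ± 2 bᵢ)` with `bᵢ = xᵢ - cᵢ`
  rw [sum_nbrs]
  simp only [sqDist] at h ⊢
  push_cast at h ⊢
  ring_nf at h ⊢
  linarith

lemma sum_nbrs_min_one_le {g : Z3 → ℝ} {x : Z3}
    (hg : g x < 1 → ∑ y ∈ nbrs x, 1 / 6 * g y ≤ g x) :
    ∑ y ∈ nbrs x, 1 / 6 * min 1 (g y) ≤ min 1 (g x) := by
  rcases le_or_gt 1 (g x) with hx | hx
  · calc ∑ y ∈ nbrs x, 1 / 6 * min 1 (g y) ≤ ∑ _y ∈ nbrs x, 1 / 6 * 1 :=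
          Finset.sum_le_sum fun y _ => by gcongr; exact min_le_left _ _
      _ = min 1 (g x) := by rw [Finset.sum_const, card_nbrs, min_eq_left hx]; norm_num
  · calc ∑ y ∈ nbrs x, 1 / 6 * min 1 (g y) ≤ ∑ y ∈ nbrs x, 1 / 6 * g y :=
          Finset.sum_le_sum fun y _ => by gcongr; exact min_le_right _ _
      _ ≤ min 1 (g x) := (hg hx).trans_eq (min_eq_right hx.le).symm

lemma hitBy_le_of_superharmonic {S : Finset Z3} {f : Z3 → ℝ} (hf₀ : ∀ x, 0 ≤ f x)
    (hfS : ∀ x ∈ S, 1 ≤ f x) (hf : ∀ x ∉ S, ∑ y ∈ nbrs x, 1 / 6 * f y ≤ f x) :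
    ∀ n x, hitBy S n x ≤ f x := by
  intro n
  induction n with
  | zero => intro x; rw [hitBy]; split_ifs with hx; exacts [hfS x hx, hf₀ x]
  | succ n ih =>
    intro x
    rw [hitBy]
    split_ifs with hx
    · exact hfS x hx
    · exact (Finset.sum_le_sum fun y _ => by gcongr; exact ih y).trans (hf x hx)

lemma hitProb_le_of_superharmonic {S : Finset Z3} {f : Z3 → ℝ} (hf₀ : ∀ x, 0 ≤ f x)
    (hfS : ∀ x ∈ S, 1 ≤ f x) (hf : ∀ x ∉ S, ∑ y ∈ nbrs x, 1 / 6 * f y ≤ f x) (x : Z3) :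
    hitProb S x ≤ f x :=
  ciSup_le fun n => hitBy_le_of_superharmonic hf₀ hfS hf n x

lemma hitProb_le_mul_sqDist_rpow {S : Finset Z3} {c : Z3} {A : ℝ} (hA₀ : 0 ≤ A) (hA : 400 ≤ A ^ 4)
    (hS : ∀ y ∈ S, sqDist c y + 1 ≤ A ^ 4) (x : Z3) :
    hitProb S x ≤ A * (sqDist c x + 1) ^ (-(1 / 4 : ℝ)) := by
  have ht (y : Z3) : 0 < sqDist c y + 1 := by linarith [sqDist_nonneg c y]
  refine (hitProb_le_of_superharmonic (f := fun y => min 1 (A * (sqDist c y + 1) ^ (-(1 / 4 : ℝ))))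
    (fun y => ?_) (fun y hy => ?_) (fun y _ => ?_) x).trans (min_le_right 1 _)
  · exact le_min zero_le_one (mul_nonneg hA₀ (Real.rpow_nonneg (ht y).le _))
  · exact le_min le_rfl
      ((le_mul_rpow_neg_quarter_iff hA₀ (ht y) zero_le_one).2 (by simpa using hS y hy))
  · refine sum_nbrs_min_one_le fun hy => ?_
    have hfar : 400 ≤ sqDist c y + 1 := by
      have := (mul_rpow_neg_quarter_le_iff hA₀ (ht y) zero_le_one).1 hy.le
      linarith
    simpa only [← Finset.mul_sum, mul_left_comm (1 / 6 : ℝ) A]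
      using mul_le_mul_of_nonneg_left (sum_nbrs_sqDist_rpow_le c y hfar) hA₀

lemma sqDist_le_of_mem_SigPlus {N M : ℕ} {y : Z3} (hy : y ∈ SigPlus N M) :
    sqDist ((N : ℤ), 0, 0) y ≤ 2 * (M : ℝ) ^ 2 := by
  simp only [SigPlus, Finset.mem_product, Finset.mem_singleton, Finset.mem_Icc] at hy
  obtain ⟨h₁, ⟨h₂, h₂'⟩, ⟨h₃, h₃'⟩⟩ := hy
  have h₂M : ((y.2.1 : ℤ) : ℝ) ^ 2 ≤ (M : ℝ) ^ 2 := by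
    exact_mod_cast sq_le_sq' h₂ h₂'
  have h₃M : ((y.2.2 : ℤ) : ℝ) ^ 2 ≤ (M : ℝ) ^ 2 := by
    exact_mod_cast sq_le_sq' h₃ h₃'
  simp only [sqDist, h₁, sub_self, sub_zero]
  push_cast
  linarith

lemma hitProb_SigPlus_le {N M : ℕ} (hM : 1 ≤ M) {x : Z3} (hx : (N : ℝ) + (M : ℝ) ^ 2 ≤ x.1) :
    hitProb (SigPlus N M) x ≤ 5 / √M := by
  set c : Z3 := ((N : ℤ), 0, 0)
  have hM₀ : (1 : ℝ) ≤ M := by exact_mod_cast hM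
  have hsqrt : √(M : ℝ) ^ 4 = (M : ℝ) ^ 2 := by
    rw [show √(M : ℝ) ^ 4 = (√(M : ℝ) ^ 2) ^ 2 by ring, Real.sq_sqrt (by positivity)]
  have hA : (5 * √M) ^ 4 = 625 * (M : ℝ) ^ 2 := by rw [mul_pow, hsqrt]; norm_num
  have hfar : (M : ℝ) ^ 4 ≤ sqDist c x + 1 := by
    have hM₂ : (M : ℝ) ^ 2 ≤ ((x.1 - c.1 : ℤ) : ℝ) := by simp only [c]; push_cast; linarith
    unfold sqDist
    nlinarith [sq_nonneg ((x.2.1 - c.2.1 : ℤ) : ℝ), sq_nonneg ((x.2.2 - c.2.2 : ℤ) : ℝ)]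
  refine (hitProb_le_mul_sqDist_rpow (c := c) (A := 5 * √M) (by positivity) (by rw [hA]; nlinarith)
    (fun y hy => by rw [hA]; nlinarith [sqDist_le_of_mem_SigPlus hy]) x).trans ?_
  rw [mul_rpow_neg_quarter_le_iff (by positivity) (by linarith [sqDist_nonneg c x]) (by positivity),
    hA, div_pow, hsqrt, div_mul_eq_mul_div, le_div_iff₀ (by positivity)]
  nlinarith

theorem statement15_general (α ε : ℝ) (hα : 0 < α) (hε : 0 < ε) :
    ∀ δ : ℝ, 0 < δ →
      ∃ N₀ : ℕ, ∀ N : ℕ, N₀ ≤ N →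
        ∀ x : Z3,
          (N : ℝ) + ((⌊(N : ℝ) ^ α⌋₊ : ℝ) ^ ((2 : ℝ) + ε)) ≤ (x.1 : ℝ) →
            hitProb (SigPlus N ⌊(N : ℝ) ^ α⌋₊) x ≤ δ := by
  intro δ hδ
  have hfloor : Tendsto (fun N : ℕ => ⌊(N : ℝ) ^ α⌋₊) atTop atTop :=
    tendsto_nat_floor_atTop.comp ((tendsto_rpow_atTop hα).comp tendsto_natCast_atTop_atTop)
  obtain ⟨N₀, hN₀⟩ := eventually_atTop.1 (hfloor.eventually_ge_atTop (max 1 ⌈25 / δ ^ 2⌉₊))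
  refine ⟨N₀, fun N hN x hx => ?_⟩
  set M := ⌊(N : ℝ) ^ α⌋₊
  have hM₁ : 1 ≤ M := le_of_max_le_left (hN₀ N hN)
  have hMδ : 25 / δ ^ 2 ≤ M :=
    (Nat.le_ceil _).trans (by exact_mod_cast le_of_max_le_right (hN₀ N hN))
  have hR : (M : ℝ) ^ 2 ≤ (M : ℝ) ^ ((2 : ℝ) + ε) := by
    rw [← Real.rpow_natCast]
    exact Real.rpow_le_rpow_of_exponent_le (by exact_mod_cast hM₁) (by push_cast; linarith)
  calc hitProb (SigPlus N M) x ≤ 5 / √M := hitProb_SigPlus_le hM₁ (by linarith)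
    _ ≤ δ := by
      rw [div_le_iff₀ (by positivity), ← div_le_iff₀' hδ]
      exact Real.le_sqrt_of_sq_le (by rwa [div_pow, show (5 : ℝ) ^ 2 = 25 by norm_num])

theorem statement15 (α ε : ℝ) (hα : 0 < α) (hα' : α < 1 / 2) (hε : 0 < ε) :
    ∀ δ : ℝ, 0 < δ →
      ∃ N₀ : ℕ, ∀ N : ℕ, N₀ ≤ N →
        ∀ x : Z3,
          (N : ℝ) + ((⌊(N : ℝ) ^ α⌋₊ : ℝ) ^ ((2 : ℝ) + ε)) ≤ (x.1 : ℝ) →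
            hitProb (SigPlus N ⌊(N : ℝ) ^ α⌋₊) x ≤ δ :=
  statement15_general α ε hα hε
end

section
/- For every λ ≠ 0 and every integer N ≥ 1 there exists exactly one bounded harmonic function u on Ω_N with boundary values (λ, −λ) at infinity. -/
open Real Filter

/-- `Λ_{N,M} = {x ∈ ℤ³ : |x₁| < N, |x₂| ≤ M, |x₃| ≤ M}`. -/
noncomputable def LamNM (N M : ℕ) : Finset Z3 :=
  Finset.Ioo (-(N : ℤ)) (N : ℤ) ×ˢ
    (Finset.Icc (-(M : ℤ)) (M : ℤ) ×ˢ Finset.Icc (-(M : ℤ)) (M : ℤ))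

/-- `Ω_N = Λ_{N,M} ∪ {x₁ ≥ N} ∪ {x₁ ≤ −N}`. -/
def inOm (N M : ℕ) (x : Z3) : Prop :=
  x ∈ LamNM N M ∨ (N : ℤ) ≤ x.1 ∨ x.1 ≤ -(N : ℤ)

noncomputable instance (N M : ℕ) : DecidablePred (inOm N M) := fun x => by unfold inOm; infer_instance

/-- The sites of `Ω_N`. -/
abbrev OmT (N M : ℕ) : Type := {x : Z3 // inOm N M x}

/-- `K_x = #{y ∈ Ω_N : y ∼ x}`. -/
noncomputable def KO (N M : ℕ) (x : Z3) : ℕ := ((nbrs x).filter (inOm N M)).card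

/-- `u` is harmonic on `Ω_N`: `K_x·u(x) = Σ_{y∈Ω_N : y∼x} u(y)` for every `x ∈ Ω_N`. -/
def Harmonic (N M : ℕ) (u : OmT N M → ℝ) : Prop :=
  ∀ x : OmT N M,
    (KO N M (x : Z3) : ℝ) * u x =
      ∑ y ∈ ((nbrs (x : Z3)).filter (inOm N M)).attach,
        u ⟨(y : Z3), (Finset.mem_filter.mp y.2).2⟩

/-- `u` is bounded on `Ω_N`. -/
def BddFun (N M : ℕ) (u : OmT N M → ℝ) : Prop := ∃ C : ℝ, ∀ x : OmT N M, |u x| ≤ C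

/-- `u` has boundary values `(λ, −λ)` at infinity: for every `δ > 0` there is `K` with
`|u(x) − λ| ≤ δ` whenever `x₁ ≤ −K` and `|u(x) + λ| ≤ δ` whenever `x₁ ≥ K`. -/
def BdryVals (lam : ℝ) (N M : ℕ) (u : OmT N M → ℝ) : Prop :=
  ∀ δ : ℝ, 0 < δ → ∃ K : ℤ,
    (∀ x : OmT N M, (x : Z3).1 ≤ -K → |u x - lam| ≤ δ) ∧
      ∀ x : OmT N M, K ≤ (x : Z3).1 → |u x + lam| ≤ δ

/-!
Existence is the discrete Perron method. Averaging over the neighbours in `Ω_N` is a monotone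
operator, so by Tarski's theorem it has a fixed point between any subsolution and any
supersolution. On `ℤ³` the profile `|x|^(-1/2)` is superharmonic far from the origin, and since it
increases towards the origin, dropping the neighbours cut off by the wall `x₁ = N` keeps it
superharmonic on `Ω_N`. Capped at `1` and set to `1` left of the wall, it gives a barrier `Φ`
that tends to `0` as `x₁ → ∞` uniformly in `x₂, x₃`; then `-1 + 2Φ` and its mirror image
`1 - 2Φ(-x₁, x₂, x₃)` squeeze a harmonic function with boundary values `(1, -1)`, and scaling
gives `(λ, -λ)`.

Uniqueness is a maximum principle. If `v` is bounded, harmonic and at most `δ` far out, and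
`S = sup v`, then harmonicity gives `S - v y ≤ 6 (S - v x)` for neighbours `x ∼ y`, so walking
outwards from a near-maximiser to the region where `v ≤ δ` shows `S ≤ δ`.
-/

open Finset

namespace Dumbbell

/-- The quadratic coefficient `11/64` lies strictly between the Taylor coefficient `5/32` and
`3/16`: the excess absorbs the higher-order terms for `|s| ≤ 1/10`, and staying below `3/16` is
what makes the sum over the six neighbours in `sum_nbrs_barrierProfile_le` drop below `6`. -/
lemma inv_rpow_quarter_le (s : ℝ) (hs : |s| ≤ 1 / 10) :
    ((1 + s)⁻¹) ^ (4⁻¹ : ℝ) ≤ 1 - s / 4 + 11 / 64 * s ^ 2 := by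
  obtain ⟨h1, h2⟩ := abs_le.1 hs
  have hpos : 0 < 1 + s := by linarith
  rw [Real.rpow_inv_le_iff_of_pos (by positivity) (by nlinarith) (by norm_num),
    inv_le_iff_one_le_mul₀' hpos, Real.rpow_ofNat]
  -- `(1 + s) * (1 - s/4 + 11/64 s²)^4 - 1 = s² R(s)` for the polynomial `R` below
  have hR : 0 ≤ 1/16 + 31/64 * s - 549/2048 * s^2 + 863/4096 * s^3 - 4455/65536 * s^4
      + 6897/262144 * s^5 - 70543/16777216 * s^6 + 14641/16777216 * s^7 := by
    nlinarith [sq_nonneg s, pow_two_nonneg (s^2), pow_two_nonneg (s^3),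
      mul_nonneg (sq_nonneg s) (by linarith : (0:ℝ) ≤ 1/10 + s)]
  nlinarith [mul_nonneg (sq_nonneg s) hR]

lemma sum_div_rpow_quarter_le {ι : Type*} (s : Finset ι) {T Q : ℝ} (hT : 0 ≤ T) (hQ : 0 < Q)
    (e : ι → ℝ) (he : ∀ i ∈ s, |e i| ≤ Q / 10) :
    ∑ i ∈ s, (T / (Q + e i)) ^ (4⁻¹ : ℝ) ≤ (T / Q) ^ (4⁻¹ : ℝ) *
      (#s - (∑ i ∈ s, e i) / (4 * Q) + 11 / 64 * (∑ i ∈ s, e i ^ 2) / Q ^ 2) := by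
  have hterm : ∀ i ∈ s, (T / (Q + e i)) ^ (4⁻¹ : ℝ) ≤
      (T / Q) ^ (4⁻¹ : ℝ) * (1 - e i / Q / 4 + 11 / 64 * (e i / Q) ^ 2) := by
    intro i hi
    have hs : |e i / Q| ≤ 1 / 10 := by
      rw [abs_div, abs_of_pos hQ, div_le_iff₀ hQ]; linarith [he i hi]
    have hsplit : T / (Q + e i) = T / Q * (1 + e i / Q)⁻¹ := by field_simp
    rw [hsplit, Real.mul_rpow (by positivity) (inv_nonneg.2 (by linarith [(abs_le.1 hs).1]))]
    exact mul_le_mul_of_nonneg_left (inv_rpow_quarter_le _ hs) (by positivity)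
  refine (sum_le_sum hterm).trans_eq ?_
  rw [← mul_sum]
  congr 1
  simp only [sum_add_distrib, sum_sub_distrib, ← sum_div, ← mul_sum, sum_const, nsmul_eq_mul,
    mul_one, div_pow]
  ring

lemma sum_filter_le_card_filter_mul {α : Type*} {s : Finset α} {p : α → Prop} [DecidablePred p]
    {f : α → ℝ} {c : ℝ} (hs : ∑ a ∈ s, f a ≤ #s * c) (hc : ∀ a ∈ s, ¬ p a → c ≤ f a) :
    ∑ a ∈ s.filter p, f a ≤ #(s.filter p) * c := by
  have hsum := sum_filter_add_sum_filter_not s p f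
  have hcard : (#s : ℝ) = #(s.filter p) + #(s.filter (¬ p ·)) := by
    exact_mod_cast (card_filter_add_card_filter_not p).symm
  rw [hcard, add_mul] at hs
  have hnot : #(s.filter (¬ p ·)) * c ≤ ∑ a ∈ s.filter (¬ p ·), f a := by
    rw [← nsmul_eq_mul]
    exact card_nsmul_le_sum _ _ _ fun a ha => hc a (mem_filter.1 ha).1 (mem_filter.1 ha).2
  linarith

/-! ### The lattice `ℤ³` -/

lemma mem_nbrs {x y : Z3} : y ∈ nbrs x ↔ y = (x.1 + 1, x.2) ∨ y = (x.1 - 1, x.2) ∨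
    y = (x.1, x.2.1 + 1, x.2.2) ∨ y = (x.1, x.2.1 - 1, x.2.2) ∨
    y = (x.1, x.2.1, x.2.2 + 1) ∨ y = (x.1, x.2.1, x.2.2 - 1) := by
  simp [nbrs]

lemma sum_nbrs {β : Type*} [AddCommMonoid β] (g : Z3 → β) (x : Z3) :
    ∑ y ∈ nbrs x, g y = g (x.1 + 1, x.2) + g (x.1 - 1, x.2) + g (x.1, x.2.1 + 1, x.2.2) +
      g (x.1, x.2.1 - 1, x.2.2) + g (x.1, x.2.1, x.2.2 + 1) + g (x.1, x.2.1, x.2.2 - 1) := by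
  rw [nbrs, sum_insert, sum_insert, sum_insert, sum_insert, sum_pair] <;>
    simp [Prod.ext_iff, add_assoc] <;> omega

lemma card_nbrs (x : Z3) : #(nbrs x) = 6 := by
  rw [card_eq_sum_ones, sum_nbrs]

def sqNorm (x : Z3) : ℤ := x.1 ^ 2 + x.2.1 ^ 2 + x.2.2 ^ 2

lemma sqNorm_nonneg (x : Z3) : 0 ≤ sqNorm x := by unfold sqNorm; positivity

lemma sum_nbrs_sqNorm_sub (x : Z3) : ∑ y ∈ nbrs x, ((sqNorm y : ℝ) - sqNorm x) = 6 := by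
  rw [sum_nbrs]; simp only [sqNorm]; push_cast; ring

lemma sum_nbrs_sqNorm_sub_sq (x : Z3) :
    ∑ y ∈ nbrs x, ((sqNorm y : ℝ) - sqNorm x) ^ 2 = 8 * sqNorm x + 6 := by
  rw [sum_nbrs]; simp only [sqNorm]; push_cast; ring

lemma abs_sqNorm_sub_le {x y : Z3} (hx : 500 ≤ sqNorm x) (hy : y ∈ nbrs x) :
    |sqNorm y - sqNorm x| * 10 ≤ sqNorm x := by
  have h : (sqNorm y - sqNorm x - 1) ^ 2 ≤ 4 * sqNorm x := by
    rcases mem_nbrs.1 hy with rfl | rfl | rfl | rfl | rfl | rfl <;> unfold sqNorm <;>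
      nlinarith [sq_nonneg x.1, sq_nonneg x.2.1, sq_nonneg x.2.2]
  rcases abs_cases (sqNorm y - sqNorm x) with ⟨h', -⟩ | ⟨h', -⟩ <;> rw [h'] <;> nlinarith

def reflect (x : Z3) : Z3 := (-x.1, x.2)

lemma reflect_reflect (x : Z3) : reflect (reflect x) = x := by simp [reflect]

lemma reflect_injective : Function.Injective reflect :=
  Function.LeftInverse.injective reflect_reflect

lemma nbrs_reflect (x : Z3) : nbrs (reflect x) = (nbrs x).image reflect := by
  ext y
  rw [mem_image]
  constructor
  · intro hy
    refine ⟨reflect y, ?_, reflect_reflect y⟩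
    rcases mem_nbrs.1 hy with rfl | rfl | rfl | rfl | rfl | rfl <;>
      simp [mem_nbrs, reflect] <;> omega
  · rintro ⟨z, hz, rfl⟩
    rcases mem_nbrs.1 hz with rfl | rfl | rfl | rfl | rfl | rfl <;>
      simp [mem_nbrs, reflect] <;> omega

/-! ### The domain `Ω_N` -/

section Domain

variable {N M : ℕ}

lemma inOm_iff {x : Z3} : inOm N M x ↔
    (-(N : ℤ) < x.1 ∧ x.1 < N ∧ -(M : ℤ) ≤ x.2.1 ∧ x.2.1 ≤ M ∧ -(M : ℤ) ≤ x.2.2 ∧ x.2.2 ≤ M) ∨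
      N ≤ x.1 ∨ x.1 ≤ -N := by
  simp [inOm, LamNM, and_assoc]

lemma inOm_reflect {x : Z3} : inOm N M (reflect x) ↔ inOm N M x := by
  simp only [inOm_iff, reflect]; omega

def outward (x : Z3) : Z3 := if 0 ≤ x.1 then (x.1 + 1, x.2) else (x.1 - 1, x.2)

lemma abs_outward_fst (x : Z3) : |(outward x).1| = |x.1| + 1 := by
  unfold outward
  split_ifs with h
  · rw [abs_of_nonneg h, abs_of_nonneg (by omega)]
  · rw [abs_of_neg (by omega), abs_of_neg (by omega : x.1 < 0)]; ring

lemma inOm_outward {x : Z3} (hx : inOm N M x) : inOm N M (outward x) := by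
  rw [inOm_iff] at hx ⊢; unfold outward; split_ifs <;> dsimp only <;> omega

lemma outward_mem_filter {x : Z3} (hx : inOm N M x) :
    outward x ∈ (nbrs x).filter (inOm N M) := by
  refine mem_filter.2 ⟨?_, inOm_outward hx⟩
  unfold outward; split_ifs <;> simp [mem_nbrs]

lemma KO_pos (x : OmT N M) : 0 < KO N M x :=
  card_pos.2 ⟨_, outward_mem_filter x.2⟩

lemma KO_le_six (x : Z3) : KO N M x ≤ 6 :=
  (card_filter_le _ _).trans (card_nbrs x).le

lemma sum_filter_nbrs_reflect (g : Z3 → ℝ) (x : Z3) :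
    ∑ y ∈ (nbrs (reflect x)).filter (inOm N M), g y =
      ∑ y ∈ (nbrs x).filter (inOm N M), g (reflect y) := by
  rw [nbrs_reflect, filter_image, sum_image reflect_injective.injOn]
  simp only [inOm_reflect]

lemma KO_reflect (x : Z3) : KO N M (reflect x) = KO N M x := by
  unfold KO
  rw [nbrs_reflect, filter_image, card_image_of_injective _ reflect_injective]
  simp only [inOm_reflect]

end Domain

/-! ### Sub- and superharmonic functions -/

section NbrSum

variable {N M : ℕ}

noncomputable def nbrSum (u : OmT N M → ℝ) (x : OmT N M) : ℝ :=
  ∑ y ∈ ((nbrs (x : Z3)).filter (inOm N M)).attach, u ⟨y, (mem_filter.1 y.2).2⟩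

def IsSubharmonic (u : OmT N M → ℝ) : Prop :=
  ∀ x : OmT N M, (KO N M (x : Z3) : ℝ) * u x ≤ nbrSum u x

def IsSuperharmonic (u : OmT N M → ℝ) : Prop :=
  ∀ x : OmT N M, nbrSum u x ≤ KO N M (x : Z3) * u x

lemma harmonic_iff {u : OmT N M → ℝ} :
    Harmonic N M u ↔ ∀ x : OmT N M, (KO N M (x : Z3) : ℝ) * u x = nbrSum u x :=
  Iff.rfl

lemma le_nbrSum {u : OmT N M → ℝ} (hu : 0 ≤ u) {x : OmT N M} {y : Z3}
    (hy : y ∈ (nbrs (x : Z3)).filter (inOm N M)) : u ⟨y, (mem_filter.1 hy).2⟩ ≤ nbrSum u x :=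
  single_le_sum (f := fun z : {z // z ∈ (nbrs (x : Z3)).filter (inOm N M)} =>
    u ⟨z, (mem_filter.1 z.2).2⟩) (fun _ _ => hu _) (mem_attach _ ⟨y, hy⟩)

lemma nbrSum_mono {u v : OmT N M → ℝ} (h : u ≤ v) (x : OmT N M) : nbrSum u x ≤ nbrSum v x :=
  sum_le_sum fun _ _ => h _

lemma nbrSum_affine (a b : ℝ) (u : OmT N M → ℝ) (x : OmT N M) :
    nbrSum (fun y => a + b * u y) x = KO N M x * a + b * nbrSum u x := by
  simp [nbrSum, sum_add_distrib, mul_sum, KO]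

lemma nbrSum_sub (u v : OmT N M → ℝ) (x : OmT N M) :
    nbrSum (fun y => u y - v y) x = nbrSum u x - nbrSum v x :=
  sum_sub_distrib _ _

lemma nbrSum_val (w : Z3 → ℝ) (x : OmT N M) :
    nbrSum (fun y => w y) x = ∑ y ∈ (nbrs (x : Z3)).filter (inOm N M), w y :=
  sum_attach _ w

lemma IsSuperharmonic.comp_reflect {w : Z3 → ℝ}
    (hw : IsSuperharmonic (fun x : OmT N M => w x)) :
    IsSuperharmonic (fun x : OmT N M => w (reflect x)) := fun x => by
  have h := hw ⟨reflect x, inOm_reflect.2 x.2⟩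
  rw [nbrSum_val, sum_filter_nbrs_reflect, KO_reflect] at h
  exact (nbrSum_val (w ∘ reflect) x).trans_le h

noncomputable def nbrMean (u : OmT N M → ℝ) (x : OmT N M) : ℝ := nbrSum u x / KO N M x

lemma nbrMean_mono : Monotone (nbrMean (N := N) (M := M)) := fun _ _ h x =>
  div_le_div_of_nonneg_right (nbrSum_mono h x) (Nat.cast_nonneg _)

lemma le_nbrMean {u : OmT N M → ℝ} (hu : IsSubharmonic u) : u ≤ nbrMean u := fun x => by
  rw [nbrMean, le_div_iff₀ (Nat.cast_pos.2 (KO_pos x)), mul_comm]; exact hu x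

lemma nbrMean_le {u : OmT N M → ℝ} (hu : IsSuperharmonic u) : nbrMean u ≤ u := fun x => by
  rw [nbrMean, div_le_iff₀ (Nat.cast_pos.2 (KO_pos x)), mul_comm]; exact hu x

lemma harmonic_of_nbrMean_eq {u : OmT N M → ℝ} (hu : nbrMean u = u) : Harmonic N M u := by
  intro x
  have h := congrFun hu x
  rw [nbrMean, div_eq_iff (Nat.cast_pos.2 (KO_pos x)).ne'] at h
  exact (mul_comm _ _).trans h.symm

theorem exists_harmonic_between {L U : OmT N M → ℝ} (hL : IsSubharmonic L)
    (hU : IsSuperharmonic U) (hLU : L ≤ U) : ∃ u, Harmonic N M u ∧ L ≤ u ∧ u ≤ U := by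
  have : Fact (L ≤ U) := ⟨hLU⟩
  let f : Set.Icc L U →o Set.Icc L U :=
    { toFun := fun u => ⟨nbrMean u, (le_nbrMean hL).trans (nbrMean_mono u.2.1),
        (nbrMean_mono u.2.2).trans (nbrMean_le hU)⟩
      monotone' := fun _ _ h => nbrMean_mono h }
  exact ⟨f.lfp, harmonic_of_nbrMean_eq (congrArg Subtype.val f.map_lfp), f.lfp.2⟩

end NbrSum

/-! ### The barrier -/

/-- Beyond this scale a site with `x₁ ≥ N` has no neighbour in the tube `Λ_{N,M}`, and
`sqNorm ≥ 500` is what `sum_nbrs_barrierProfile_le` needs. -/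
def barrierScale (N M : ℕ) : ℤ := N ^ 2 + 2 * M ^ 2 + 500

noncomputable def barrierProfile (N M : ℕ) (x : Z3) : ℝ :=
  ((barrierScale N M : ℝ) / sqNorm x) ^ (4⁻¹ : ℝ)

noncomputable def barrier (N M : ℕ) (x : Z3) : ℝ :=
  if x.1 < N ∨ sqNorm x ≤ barrierScale N M then 1 else barrierProfile N M x

section Barrier

variable (N M : ℕ)

lemma barrierScale_pos : 0 < (barrierScale N M : ℝ) := by
  unfold barrierScale; positivity

lemma barrierProfile_nonneg (x : Z3) : 0 ≤ barrierProfile N M x :=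
  Real.rpow_nonneg (div_nonneg (barrierScale_pos N M).le (by exact_mod_cast sqNorm_nonneg x)) _

lemma barrier_nonneg (x : Z3) : 0 ≤ barrier N M x := by
  unfold barrier; split_ifs
  · exact zero_le_one
  · exact barrierProfile_nonneg N M x

lemma barrier_le_one (x : Z3) : barrier N M x ≤ 1 := by
  unfold barrier barrierProfile; split_ifs with h
  · exact le_rfl
  · push Not at h
    have hq : (barrierScale N M : ℝ) < sqNorm x := by exact_mod_cast h.2
    exact Real.rpow_le_one (div_nonneg (barrierScale_pos N M).le (by linarith [barrierScale_pos N M]))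
      ((div_le_one (by linarith [barrierScale_pos N M])).2 hq.le) (by norm_num)

variable {N M}

lemma barrier_of_fst_lt {x : Z3} (hx : x.1 < N) : barrier N M x = 1 := if_pos (Or.inl hx)

lemma barrier_le_barrierProfile (hN : 1 ≤ N) {y : Z3} (hy : N ≤ y.1) :
    barrier N M y ≤ barrierProfile N M y := by
  unfold barrier; split_ifs with h
  · have hyq : (0 : ℝ) < sqNorm y := by
      have : 0 < sqNorm y := by unfold sqNorm; nlinarith [sq_nonneg y.2.1, sq_nonneg y.2.2]
      exact_mod_cast this
    have hT : (sqNorm y : ℝ) ≤ barrierScale N M := by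
      rcases h with h | h
      · omega
      · exact_mod_cast h
    exact Real.one_le_rpow ((one_le_div hyq).2 hT) (by norm_num)
  · exact le_rfl

lemma barrierProfile_anti {x y : Z3} (hy : 0 < sqNorm y) (hyx : sqNorm y ≤ sqNorm x) :
    barrierProfile N M x ≤ barrierProfile N M y :=
  Real.rpow_le_rpow (div_nonneg (barrierScale_pos N M).le (by exact_mod_cast hy.le.trans hyx))
    (div_le_div_of_nonneg_left (barrierScale_pos N M).le (by exact_mod_cast hy)
      (by exact_mod_cast hyx)) (by norm_num)

lemma sum_nbrs_barrierProfile_le {x : Z3} (hx : 500 ≤ sqNorm x) :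
    ∑ y ∈ nbrs x, barrierProfile N M y ≤ 6 * barrierProfile N M x := by
  have hQ : (500 : ℝ) ≤ sqNorm x := by exact_mod_cast hx
  have h := sum_div_rpow_quarter_le (nbrs x) (barrierScale_pos N M).le
    (by linarith : (0 : ℝ) < sqNorm x) (fun y => (sqNorm y : ℝ) - sqNorm x) fun y hy => by
      rw [le_div_iff₀ (by norm_num)]; exact_mod_cast abs_sqNorm_sub_le hx hy
  simp only [add_sub_cancel, sum_nbrs_sqNorm_sub, sum_nbrs_sqNorm_sub_sq, card_nbrs] at h
  have hbracket :
      (6 : ℝ) - 6 / (4 * sqNorm x) + 11 / 64 * (8 * sqNorm x + 6) / sqNorm x ^ 2 ≤ 6 := by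
    have : 11 / 64 * (8 * sqNorm x + 6) / (sqNorm x : ℝ) ^ 2 ≤ 6 / (4 * sqNorm x) := by
      rw [div_le_div_iff₀ (by positivity) (by positivity)]; nlinarith
    linarith
  calc ∑ y ∈ nbrs x, barrierProfile N M y
      ≤ barrierProfile N M x *
          (6 - 6 / (4 * sqNorm x) + 11 / 64 * (8 * sqNorm x + 6) / sqNorm x ^ 2) := h
    _ ≤ barrierProfile N M x * 6 :=
        mul_le_mul_of_nonneg_left hbracket (barrierProfile_nonneg N M x)
    _ = 6 * barrierProfile N M x := mul_comm _ _

lemma eq_of_mem_nbrs_of_fst_lt {x y : Z3} (hx : N ≤ x.1) (hy : y ∈ nbrs x) (hyN : y.1 < N) :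
    x.1 = N ∧ y = (x.1 - 1, x.2) := by
  rcases mem_nbrs.1 hy with rfl | rfl | rfl | rfl | rfl | rfl <;>
    simp only [Prod.ext_iff, and_true, true_and] at hyN ⊢ <;> omega

theorem isSuperharmonic_barrier (hN : 1 ≤ N) :
    IsSuperharmonic (fun x : OmT N M => barrier N M x) := by
  intro x
  rw [nbrSum_val]
  dsimp only
  by_cases hx : (x : Z3).1 < N ∨ sqNorm x ≤ barrierScale N M
  · rw [show barrier N M x = 1 from if_pos hx, mul_one, KO, card_eq_sum_ones, Nat.cast_sum,
      Nat.cast_one]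
    exact sum_le_sum fun y _ => barrier_le_one N M y
  have hΦx : barrier N M x = barrierProfile N M x := if_neg hx
  push Not at hx
  obtain ⟨hxN, hxT⟩ := hx
  have h500 : 500 ≤ sqNorm (x : Z3) := by unfold barrierScale at hxT; nlinarith
  have hin : ∀ y ∈ (nbrs (x : Z3)).filter (inOm N M), barrier N M y ≤ barrierProfile N M y := by
    intro y hy
    obtain ⟨hy, hyΩ⟩ := mem_filter.1 hy
    refine barrier_le_barrierProfile hN (not_lt.1 fun hyN => ?_)
    -- such a neighbour would lie in the tube, but `x` is too far from it
    obtain ⟨hxN', rfl⟩ := eq_of_mem_nbrs_of_fst_lt hxN hy hyN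
    rw [inOm_iff] at hyΩ
    obtain ⟨h2, h2', h3, h3'⟩ : -(M : ℤ) ≤ (x : Z3).2.1 ∧ (x : Z3).2.1 ≤ M ∧
        -(M : ℤ) ≤ (x : Z3).2.2 ∧ (x : Z3).2.2 ≤ M := by
      simp only at hyΩ; omega
    have := sq_le_sq' h2 h2'
    have := sq_le_sq' h3 h3'
    unfold sqNorm barrierScale at hxT
    rw [hxN'] at hxT
    linarith
  -- a neighbour cut off by the wall is closer to the origin
  have hout : ∀ y ∈ nbrs (x : Z3), ¬ inOm N M y →
      barrierProfile N M x ≤ barrierProfile N M y := by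
    intro y hy hyΩ
    have hyN : y.1 < N := by rw [inOm_iff] at hyΩ; omega
    have hyq := abs_sqNorm_sub_le h500 hy
    obtain ⟨-, rfl⟩ := eq_of_mem_nbrs_of_fst_lt hxN hy hyN
    have := neg_abs_le (sqNorm ((x : Z3).1 - 1, (x : Z3).2) - sqNorm x)
    refine barrierProfile_anti (by linarith) ?_
    unfold sqNorm; nlinarith
  calc ∑ y ∈ (nbrs (x : Z3)).filter (inOm N M), barrier N M y
      ≤ ∑ y ∈ (nbrs (x : Z3)).filter (inOm N M), barrierProfile N M y := sum_le_sum hin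
    _ ≤ KO N M x * barrierProfile N M x := sum_filter_le_card_filter_mul
        (by rw [card_nbrs]; exact_mod_cast sum_nbrs_barrierProfile_le h500) hout
    _ = KO N M x * barrier N M x := by rw [hΦx]

lemma barrier_le_of_far {δ : ℝ} (hδ : 0 < δ) :
    ∃ K : ℤ, ∀ x : Z3, K ≤ x.1 → barrier N M x ≤ δ := by
  obtain ⟨K, hK⟩ := exists_int_gt ((barrierScale N M : ℝ) / δ ^ 4)
  refine ⟨max K (barrierScale N M + N + 1), fun x hx => ?_⟩
  have hxK : K ≤ x.1 := le_of_max_le_left hx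
  have hxT : barrierScale N M + N + 1 ≤ x.1 := le_of_max_le_right hx
  have hT : 0 < barrierScale N M := by unfold barrierScale; positivity
  have hq : x.1 ≤ sqNorm x := by
    have : x.1 ≤ x.1 ^ 2 := by nlinarith
    unfold sqNorm; nlinarith [sq_nonneg x.2.1, sq_nonneg x.2.2]
  have hqR : (barrierScale N M : ℝ) < δ ^ 4 * sqNorm x := by
    rw [← div_lt_iff₀' (by positivity)]
    exact hK.trans_le (by exact_mod_cast hxK.trans hq)
  rw [barrier, if_neg (by omega), barrierProfile,
    Real.rpow_inv_le_iff_of_pos (div_nonneg (barrierScale_pos N M).le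
      (by exact_mod_cast sqNorm_nonneg x)) hδ.le (by norm_num),
    div_le_iff₀ (by exact_mod_cast (show (0 : ℤ) < sqNorm x by omega)), Real.rpow_ofNat]
  exact hqR.le

end Barrier

theorem exists_harmonic_bdryVals_one {N M : ℕ} (hN : 1 ≤ N) :
    ∃ u : OmT N M → ℝ, (∀ x, |u x| ≤ 1) ∧ Harmonic N M u ∧ BdryVals 1 N M u := by
  let U : OmT N M → ℝ := fun x => -1 + 2 * barrier N M x
  let L : OmT N M → ℝ := fun x => 1 + -2 * barrier N M (reflect x)
  have hU : IsSuperharmonic U := fun x => by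
    have := isSuperharmonic_barrier (M := M) hN x
    simp only [U, nbrSum_affine (u := fun y : OmT N M => barrier N M y)]
    linarith
  have hL : IsSubharmonic L := fun x => by
    have := (isSuperharmonic_barrier (M := M) hN).comp_reflect x
    simp only [L, nbrSum_affine (u := fun y : OmT N M => barrier N M (reflect y))]
    linarith
  have hLU : L ≤ U := fun x => by
    by_cases hx : (x : Z3).1 < N
    · simp only [U, L, barrier_of_fst_lt hx]
      linarith [barrier_nonneg N M (reflect x)]
    · simp only [U, L, barrier_of_fst_lt (show (reflect x).1 < N by simp only [reflect]; omega)]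
      linarith [barrier_nonneg N M x]
  obtain ⟨u, hu, hLu, huU⟩ := exists_harmonic_between hL hU hLU
  have hlow : ∀ x : OmT N M, 1 + -2 * barrier N M (reflect x) ≤ u x := hLu
  have hup : ∀ x : OmT N M, u x ≤ -1 + 2 * barrier N M x := huU
  refine ⟨u, fun x => abs_le.2 ⟨?_, ?_⟩, hu, fun δ hδ => ?_⟩
  · linarith [hlow x, barrier_le_one N M (reflect x)]
  · linarith [hup x, barrier_le_one N M x]
  obtain ⟨K, hK⟩ := barrier_le_of_far (N := N) (M := M) (half_pos hδ)
  refine ⟨K, fun x hx => abs_le.2 ⟨?_, ?_⟩, fun x hx => abs_le.2 ⟨?_, ?_⟩⟩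
  · linarith [hlow x, hK (reflect x) (by simp only [reflect]; omega)]
  · linarith [hup x, barrier_le_one N M x]
  · linarith [hlow x, barrier_le_one N M (reflect x)]
  · linarith [hup x, hK x hx]

section Scaling

variable {N M : ℕ} {u : OmT N M → ℝ}

lemma harmonic_const_mul (hu : Harmonic N M u) (c : ℝ) : Harmonic N M (fun x => c * u x) := by
  rw [harmonic_iff] at hu ⊢
  intro x
  have h := nbrSum_affine 0 c u x
  simp only [zero_add, mul_zero] at h
  rw [h, ← hu x]
  ring

lemma bdryVals_const_mul (hu : BdryVals 1 N M u) (c : ℝ) :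
    BdryVals c N M (fun x => c * u x) := by
  intro δ hδ
  have hc : 0 < |c| + 1 := by positivity
  obtain ⟨K, hl, hr⟩ := hu (δ / (|c| + 1)) (by positivity)
  have key : ∀ t : ℝ, |t| ≤ δ / (|c| + 1) → |c * t| ≤ δ := fun t ht => by
    rw [abs_mul]
    calc |c| * |t| ≤ (|c| + 1) * (δ / (|c| + 1)) := by gcongr; linarith
      _ = δ := mul_div_cancel₀ δ hc.ne'
  refine ⟨K, fun x hx => ?_, fun x hx => ?_⟩
  · simpa [mul_sub] using key _ (hl x hx)
  · simpa [mul_add] using key _ (hr x hx)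

end Scaling

theorem exists_harmonic_bdryVals {N M : ℕ} (hN : 1 ≤ N) (lam : ℝ) :
    ∃ u : OmT N M → ℝ, BddFun N M u ∧ Harmonic N M u ∧ BdryVals lam N M u := by
  obtain ⟨u, hb, hu, hv⟩ := exists_harmonic_bdryVals_one (M := M) hN
  refine ⟨fun x => lam * u x, ⟨|lam|, fun x => ?_⟩, harmonic_const_mul hu lam,
    bdryVals_const_mul hv lam⟩
  rw [abs_mul]
  exact mul_le_of_le_one_right (abs_nonneg lam) (hb x)

/-! ### Uniqueness -/

section MaximumPrinciple

variable {N M : ℕ} {v : OmT N M → ℝ} {S : ℝ}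

lemma sub_outward_le (hv : Harmonic N M v) (hS : ∀ z, v z ≤ S) (x : OmT N M) :
    S - v ⟨outward x, inOm_outward x.2⟩ ≤ 6 * (S - v x) := by
  have hsum : nbrSum (fun y => S + -1 * v y) x = KO N M x * (S - v x) := by
    rw [nbrSum_affine, ← harmonic_iff.1 hv x]; ring
  have hterm := le_nbrSum (u := fun y => S + -1 * v y) (fun y => by simp [hS y])
    (outward_mem_filter x.2)
  have hK : (KO N M x : ℝ) ≤ 6 := by exact_mod_cast KO_le_six (N := N) (M := M) x
  rw [hsum] at hterm
  nlinarith [hS x]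

lemma exists_far_sub_le (hv : Harmonic N M v) (hS : ∀ z, v z ≤ S) (x : OmT N M) (n : ℕ) :
    ∃ y : OmT N M, |(x : Z3).1| + n ≤ |(y : Z3).1| ∧ S - v y ≤ 6 ^ n * (S - v x) := by
  induction n generalizing x with
  | zero => exact ⟨x, by simp, by simp⟩
  | succ n ih =>
    obtain ⟨y, hy, hyS⟩ := ih ⟨outward x, inOm_outward x.2⟩
    refine ⟨y, by have := abs_outward_fst (x : Z3); push_cast; linarith, ?_⟩
    calc S - v y ≤ 6 ^ n * (S - v ⟨outward x, inOm_outward x.2⟩) := hyS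
      _ ≤ 6 ^ n * (6 * (S - v x)) :=
        mul_le_mul_of_nonneg_left (sub_outward_le hv hS x) (by positivity)
      _ = 6 ^ (n + 1) * (S - v x) := by ring

theorem nonpos_of_harmonic (hv : Harmonic N M v) (hbdd : BddAbove (Set.range v))
    (hfar : ∀ δ > 0, ∃ K : ℕ, ∀ x : OmT N M, (K : ℤ) ≤ |(x : Z3).1| → v x ≤ δ)
    (x : OmT N M) : v x ≤ 0 := by
  have : Nonempty (OmT N M) := ⟨x⟩
  have hS : ∀ z, v z ≤ ⨆ z, v z := le_ciSup hbdd
  refine (hS x).trans (le_of_forall_pos_le_add fun δ hδ => ?_)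
  rw [zero_add]
  obtain ⟨K, hK⟩ := hfar δ hδ
  refine le_of_forall_pos_le_add fun ε hε => ?_
  have h6 : (0 : ℝ) < 6 ^ K := by positivity
  obtain ⟨z, hz⟩ := exists_lt_of_lt_ciSup (sub_lt_self (⨆ z, v z) (div_pos hε h6))
  obtain ⟨y, hy, hyS⟩ := exists_far_sub_le hv hS z K
  have hvy := hK y (by linarith [abs_nonneg (z : Z3).1])
  have : 6 ^ K * ((⨆ z, v z) - v z) ≤ ε := by
    rw [← le_div_iff₀' h6]; linarith
  linarith

end MaximumPrinciple

section Uniqueness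

variable {N M : ℕ} {lam : ℝ} {u₁ u₂ : OmT N M → ℝ}

lemma harmonic_sub (h₁ : Harmonic N M u₁) (h₂ : Harmonic N M u₂) :
    Harmonic N M (fun x => u₁ x - u₂ x) := by
  rw [harmonic_iff] at h₁ h₂ ⊢
  intro x
  rw [nbrSum_sub, ← h₁ x, ← h₂ x]
  ring

lemma sub_le_of_bdryVals (h₁ : BdryVals lam N M u₁) (h₂ : BdryVals lam N M u₂) {δ : ℝ}
    (hδ : 0 < δ) : ∃ K : ℕ, ∀ x : OmT N M, (K : ℤ) ≤ |(x : Z3).1| → u₁ x - u₂ x ≤ δ := by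
  obtain ⟨K₁, hl₁, hr₁⟩ := h₁ (δ / 2) (half_pos hδ)
  obtain ⟨K₂, hl₂, hr₂⟩ := h₂ (δ / 2) (half_pos hδ)
  refine ⟨(max K₁ K₂).toNat, fun x hx => ?_⟩
  rcases le_abs'.1 hx with hx | hx
  · linarith [(abs_le.1 (hl₁ x (by omega))).2, (abs_le.1 (hl₂ x (by omega))).1]
  · linarith [(abs_le.1 (hr₁ x (by omega))).2, (abs_le.1 (hr₂ x (by omega))).1]

lemma sub_nonpos_of_bdryVals
    (h₁ : BddFun N M u₁ ∧ Harmonic N M u₁ ∧ BdryVals lam N M u₁)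
    (h₂ : BddFun N M u₂ ∧ Harmonic N M u₂ ∧ BdryVals lam N M u₂) (x : OmT N M) :
    u₁ x - u₂ x ≤ 0 := by
  obtain ⟨⟨C₁, hC₁⟩, hu₁, hV₁⟩ := h₁
  obtain ⟨⟨C₂, hC₂⟩, hu₂, hV₂⟩ := h₂
  refine nonpos_of_harmonic (harmonic_sub hu₁ hu₂) ⟨C₁ + C₂, ?_⟩
    (fun δ hδ => sub_le_of_bdryVals hV₁ hV₂ hδ) x
  rintro _ ⟨y, rfl⟩
  linarith [le_abs_self (u₁ y), neg_abs_le (u₂ y), hC₁ y, hC₂ y]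

end Uniqueness

end Dumbbell

theorem statement17_general (lam α : ℝ) (N : ℕ) (hN : 1 ≤ N) :
    ∃! u : OmT N ⌊(N : ℝ) ^ α⌋₊ → ℝ,
      BddFun N ⌊(N : ℝ) ^ α⌋₊ u ∧
        Harmonic N ⌊(N : ℝ) ^ α⌋₊ u ∧
          BdryVals lam N ⌊(N : ℝ) ^ α⌋₊ u := by
  obtain ⟨u, hu⟩ := Dumbbell.exists_harmonic_bdryVals hN lam
  refine ⟨u, hu, fun v hv => funext fun x => ?_⟩
  linarith [Dumbbell.sub_nonpos_of_bdryVals hv hu x, Dumbbell.sub_nonpos_of_bdryVals hu hv x]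

theorem statement17 (lam α : ℝ) (hlam : lam ≠ 0) (hα : 0 < α) (hα' : α < 1 / 2)
    (N : ℕ) (hN : 1 ≤ N) :
    ∃! u : OmT N ⌊(N : ℝ) ^ α⌋₊ → ℝ,
      BddFun N ⌊(N : ℝ) ^ α⌋₊ u ∧
        Harmonic N ⌊(N : ℝ) ^ α⌋₊ u ∧
          BdryVals lam N ⌊(N : ℝ) ^ α⌋₊ u :=
  statement17_general lam α N hN
end
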